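/- Let χ_1 be a Dirichlet character mod M, χ_2 a primitive Dirichlet character mod N with gcd(M,N)=1, H = MN, and k−j ≥ 1 an integer with χ_1χ_2(−1) = (−1)^{k−j}. Define the Dirichlet series D(s) = Σ_{a=1}^{H} Σ_{b=1}^{H} χ_1(a) χ_2(b) [ζ(a/H, s−(k−j)+1) ζ*(b/H, s) + (−1)^{k−j} ζ(−a/H, s−(k−j)+1) ζ*(−b/H, s)], where ζ*(β, s) = Σ_{n≥1} e^{2πiβn} n^{-s}. Then (1/(2G(χ_2))) D(s) = N^{s−1} H^{2−(k−j)} L_M(χ_1, s − (k−j) + 1) · L(χ_2^{-1}, s) (as an identity of Dirichlet series for Re(s) large). -/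

import Mathlib

/-!
Write `H = MN`, `σ = s - w + 1`, `A = ∑ₐ χ₁(a) ζ(a/H, σ)` and `B = ∑_b χ₂(b) ζ*(b/H, s)`.
The substitution `a ↦ -a` mod `H` turns the sums with `-a/H`, `-b/H` into `χ₁(-1) A` and
`χ₂(-1) B`, so by the parity condition the double sum is `2AB`.

Since `ζ(x, ·)` and `ζ*(x, ·)` are Mathlib's `hurwitzZeta` and `expZeta` at `x mod 1`, the sum
`A` is `H^σ` times the L-function of `χ₁` pulled back to `ZMod H`, i.e. `H^σ L_M(χ₁, σ)`.
The sum `B` is the Dirichlet series with coefficients `c(n) = ∑_{j mod H} χ₂(j) e(jn/H)`;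
writing `j = Nq + r`, the sum over `q` vanishes unless `M ∣ n`, and for `n = Mk` primitivity of
`χ₂` gives `c(n) = M χ₂⁻¹(k) G(χ₂)`. Hence `B = M^{1-s} G(χ₂) L(χ₂⁻¹, s)`, and the factor
`G(χ₂)` cancels because it is nonzero for primitive `χ₂`.
-/

open Complex

/-- `hzeta x s = ζ(x, s) = ∑_{t > 0, t ≡ x mod ℤ} t^{-s}`: the Hurwitz-type zeta
function attached to `x ∈ ℝ/ℤ`; the smallest positive real congruent to `x` mod `ℤ`
is `1 - Int.fract (-x)`. -/
noncomputable def hzeta (x : ℝ) (s : ℂ) : ℂ :=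
  ∑' n : ℕ, (((n : ℝ) + (1 - Int.fract (-x)) : ℝ) : ℂ) ^ (-s)

/-- `hzetaStar x s = ζ*(x, s) = ∑_{n ≥ 1} e^{2πixn} n^{-s}`. -/
noncomputable def hzetaStar (x : ℝ) (s : ℂ) : ℂ :=
  ∑' n : ℕ, Complex.exp (2 * Real.pi * Complex.I * (x : ℂ) * ((n : ℂ) + 1)) / ((n : ℂ) + 1) ^ s

open Finset HurwitzZeta

lemma hzeta_eq_hurwitzZeta (x : ℝ) {s : ℂ} (hs : 1 < s.re) : hzeta x s = hurwitzZeta x s := by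
  have hmem : 1 - Int.fract (-x) ∈ Set.Icc (0 : ℝ) 1 :=
    ⟨by linarith [Int.fract_lt_one (-x)], by linarith [Int.fract_nonneg (-x)]⟩
  have hcoe : ((1 - Int.fract (-x) : ℝ) : UnitAddCircle) = x := by
    rw [Int.fract, show 1 - (-x - ⌊-x⌋) = x + ((1 + ⌊-x⌋ : ℤ) : ℝ) by push_cast; ring]
    simp
  rw [← hcoe, ← (hasSum_hurwitzZeta_of_one_lt_re hmem hs).tsum_eq, hzeta]
  congr 1 with n
  rw [cpow_neg, one_div]
  push_cast
  rfl

lemma hzetaStar_eq_expZeta (x : ℝ) {s : ℂ} (hs : 1 < s.re) : hzetaStar x s = expZeta x s := by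
  have h := (hasSum_nat_add_iff' 1).mpr (hasSum_expZeta_of_one_lt_re x hs)
  simp only [Nat.cast_add, Nat.cast_one, range_one, sum_singleton, CharP.cast_eq_zero, mul_zero,
    exp_zero, zero_cpow (ne_zero_of_one_lt_re hs), div_zero, sub_zero] at h
  rw [hzetaStar, h.tsum_eq]

lemma sum_range_natCast_eq_sum_zmod {β : Type*} [AddCommMonoid β] {H : ℕ} [NeZero H]
    (g : ZMod H → β) : ∑ b ∈ range H, g b = ∑ j, g j := by
  refine sum_nbij' (fun b => b) ZMod.val (fun _ _ => mem_univ _)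
    (fun j _ => mem_range.2 j.val_lt) (fun b hb => ZMod.val_cast_of_lt (mem_range.1 hb))
    (fun j _ => ZMod.natCast_zmod_val j) (fun _ _ => rfl)

lemma sum_range_succ_natCast_eq_sum_zmod {β : Type*} [AddCommMonoid β] {H : ℕ} [NeZero H]
    (g : ZMod H → β) : ∑ a ∈ range H, g ((a + 1 : ℕ) : ZMod H) = ∑ j, g j := by
  simp only [Nat.cast_succ]
  rw [sum_range_natCast_eq_sum_zmod fun j => g (j + 1)]
  exact Fintype.sum_equiv (Equiv.addRight 1) _ _ fun _ => rfl

lemma sum_range_mul_eq_sum_sum {β : Type*} [AddCommMonoid β] (f : ℕ → β) (M N : ℕ) :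
    ∑ b ∈ range (M * N), f b = ∑ q ∈ range M, ∑ r ∈ range N, f (N * q + r) := by
  induction M with
  | zero => simp
  | succ M ih => rw [Nat.succ_mul, sum_range_add, ih, sum_range_succ, mul_comm M]

lemma sum_range_succ_mul_eq_sum_zmod {d H : ℕ} [NeZero H] (hdH : d ∣ H) (f : ZMod d → ℂ)
    (F : UnitAddCircle → ℂ) :
    ∑ a ∈ range H, f ((a + 1 : ℕ) : ZMod d) * F ↑(((a : ℝ) + 1) / H) =
      ∑ j : ZMod H, f (ZMod.castHom hdH (ZMod d) j) * F (ZMod.toAddCircle j) := by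
  rw [← sum_range_succ_natCast_eq_sum_zmod]
  refine sum_congr rfl fun a _ => ?_
  rw [map_natCast, ZMod.toAddCircle_natCast]
  push_cast
  rfl

lemma sum_castHom_mul_comp_neg {d H : ℕ} [NeZero H] (hdH : d ∣ H) (χ : DirichletCharacter ℂ d)
    (g : ZMod H → ℂ) :
    ∑ j, χ (ZMod.castHom hdH (ZMod d) j) * g (-j) =
      χ (-1) * ∑ j, χ (ZMod.castHom hdH (ZMod d) j) * g j := by
  rw [mul_sum]
  refine Fintype.sum_equiv (Equiv.neg _) _ _ fun j => ?_
  rw [Equiv.neg_apply, map_neg (ZMod.castHom hdH (ZMod d)),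
    ← neg_one_mul (ZMod.castHom hdH (ZMod d) j), map_mul, ← mul_assoc, ← mul_assoc, ← map_mul,
    neg_one_mul, neg_neg, map_one, one_mul]

lemma sum_range_succ_mul_comp_neg {d H : ℕ} [NeZero H] (hdH : d ∣ H)
    (χ : DirichletCharacter ℂ d) (F : UnitAddCircle → ℂ) :
    ∑ a ∈ range H, χ ((a + 1 : ℕ) : ZMod d) * F ↑(-(((a : ℝ) + 1) / H)) =
      χ (-1) * ∑ a ∈ range H, χ ((a + 1 : ℕ) : ZMod d) * F ↑(((a : ℝ) + 1) / H) := by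
  simp only [AddCircle.coe_neg]
  rw [sum_range_succ_mul_eq_sum_zmod hdH χ, ← sum_castHom_mul_comp_neg hdH χ]
  simpa only [map_neg] using sum_range_succ_mul_eq_sum_zmod hdH χ fun z => F (-z)

lemma sum_mul_hurwitzZeta_toAddCircle {H : ℕ} [NeZero H] (Φ : ZMod H → ℂ) {s : ℂ}
    (hs : 1 < s.re) :
    ∑ j, Φ j * hurwitzZeta (ZMod.toAddCircle j) s = H ^ s * LSeries (Φ ·) s := by
  have hH : (H : ℂ) ≠ 0 := NeZero.ne _
  rw [← ZMod.LFunction_eq_LSeries Φ hs, ZMod.LFunction, ← mul_assoc, ← cpow_add _ _ hH,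
    add_neg_cancel, cpow_zero, one_mul]

lemma sum_mul_expZeta_toAddCircle {H : ℕ} [NeZero H] (Φ : ZMod H → ℂ) {s : ℂ}
    (hs : 1 < s.re) :
    ∑ j, Φ j * expZeta (ZMod.toAddCircle j) s =
      LSeries (fun n => ∑ j, ZMod.stdAddChar (j * (n : ZMod H)) * Φ j) s := by
  have h := ZMod.LFunction_dft (fun j => Φ (-j)) (s := s) (.inr (by rintro rfl; simp at hs))
  rw [ZMod.LFunction_eq_LSeries _ hs, Fintype.sum_equiv (Equiv.neg _) _
    (fun j => Φ j * expZeta (ZMod.toAddCircle j) s) fun _ => by simp] at h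
  rw [← h]
  congr 1 with n
  rw [ZMod.dft_apply]
  exact Fintype.sum_equiv (Equiv.neg _) _ _ fun j => by simp

lemma LSeries_ite_dvd {M : ℕ} [NeZero M] (a : ℕ → ℂ) (s : ℂ) :
    LSeries (fun n => if M ∣ n then a (n / M) else 0) s = M ^ (-s) * LSeries a s := by
  have hM : (M : ℂ) ≠ 0 := NeZero.ne _
  have hsupp : (Function.support fun n =>
      LSeries.term (fun n => if M ∣ n then a (n / M) else 0) s n) ⊆ Set.range (M * ·) := by
    intro n hn
    by_contra h
    refine (Function.mem_support.mp hn) ?_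
    rcases eq_or_ne n 0 with rfl | hn0
    · exact LSeries.term_zero _ _
    · rw [LSeries.term_of_ne_zero hn0, if_neg fun ⟨k, hk⟩ => h ⟨k, hk.symm⟩, zero_div]
  rw [LSeries, LSeries, ← tsum_mul_left, ← (mul_right_injective₀ (NeZero.ne M)).tsum_eq hsupp]
  congr 1 with k
  rcases eq_or_ne k 0 with rfl | hk
  · simp [LSeries.term_zero]
  · rw [LSeries.term_of_ne_zero (mul_ne_zero (NeZero.ne M) hk), LSeries.term_of_ne_zero hk,
      if_pos (dvd_mul_right M k), Nat.mul_div_cancel_left k (Nat.pos_of_neZero M), Nat.cast_mul,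
      natCast_mul_natCast_cpow, cpow_neg]
    have : (M : ℂ) ^ s ≠ 0 := by simp [hM]
    field_simp

lemma stdAddChar_natCast_mul {d N H : ℕ} [NeZero N] [NeZero H] (hH : H = d * N) (a : ℕ) :
    ZMod.stdAddChar ((d * a : ℕ) : ZMod H) = ZMod.stdAddChar (a : ZMod N) := by
  subst hH
  have hd : (d : ℂ) ≠ 0 := by exact_mod_cast left_ne_zero_of_mul (NeZero.ne (d * N))
  have hN : (N : ℂ) ≠ 0 := NeZero.ne _
  simp only [ZMod.stdAddChar_apply, ZMod.toCircle_natCast]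
  congr 1
  push_cast
  field_simp

lemma sum_range_stdAddChar_natCast_mul {M : ℕ} [NeZero M] (n : ℕ) :
    ∑ q ∈ range M, ZMod.stdAddChar ((q * n : ℕ) : ZMod M) = if M ∣ n then (M : ℂ) else 0 := by
  simp only [Nat.cast_mul]
  rw [sum_range_natCast_eq_sum_zmod fun x : ZMod M => ZMod.stdAddChar (x * (n : ZMod M)),
    AddChar.sum_mulShift _ (ZMod.isPrimitive_stdAddChar M), ZMod.card]
  simp only [ZMod.natCast_eq_zero_iff, Nat.cast_ite, Nat.cast_zero]

lemma sum_stdAddChar_mul_castHom {M N : ℕ} [NeZero M] [NeZero N] (f : ZMod N → ℂ) (n : ℕ) :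
    ∑ j : ZMod (M * N),
        ZMod.stdAddChar (j * (n : ZMod (M * N))) * f (ZMod.castHom (dvd_mul_left N M) (ZMod N) j) =
      if M ∣ n then M * ∑ y : ZMod N, ZMod.stdAddChar (y * ((n / M : ℕ) : ZMod N)) * f y
      else 0 := by
  have hterm : ∀ q r : ℕ,
      ZMod.stdAddChar (((N * q + r : ℕ) : ZMod (M * N)) * (n : ZMod (M * N))) *
        f (ZMod.castHom (dvd_mul_left N M) (ZMod N) (N * q + r : ℕ)) =
      ZMod.stdAddChar ((q * n : ℕ) : ZMod M) *
        (ZMod.stdAddChar ((r * n : ℕ) : ZMod (M * N)) * f r) := by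
    intro q r
    rw [map_natCast, ← Nat.cast_mul, add_mul, mul_assoc, Nat.cast_add, AddChar.map_add_eq_mul,
      stdAddChar_natCast_mul (mul_comm M N), Nat.cast_add (R := ZMod N),
      Nat.cast_mul (α := ZMod N), ZMod.natCast_self, zero_mul, zero_add, mul_assoc]
  rw [← sum_range_natCast_eq_sum_zmod, sum_range_mul_eq_sum_sum, sum_comm]
  simp only [hterm, ← mul_sum, ← sum_mul, sum_range_stdAddChar_natCast_mul]
  split_ifs with hMn
  · obtain ⟨k, rfl⟩ := hMn
    rw [Nat.mul_div_cancel_left k (Nat.pos_of_neZero M), ← sum_range_natCast_eq_sum_zmod]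
    congr 1
    refine sum_congr rfl fun r _ => ?_
    rw [mul_left_comm, stdAddChar_natCast_mul rfl, Nat.cast_mul]
  · rw [zero_mul]

lemma sum_stdAddChar_mul_eq_inv_mul_gaussSum {N : ℕ} [NeZero N] {χ : DirichletCharacter ℂ N}
    (hχ : χ.IsPrimitive) (k : ZMod N) :
    ∑ y, ZMod.stdAddChar (y * k) * χ y = χ⁻¹ k * gaussSum χ ZMod.stdAddChar := by
  rw [← gaussSum_mulShift_of_isPrimitive _ hχ, gaussSum]
  simp only [AddChar.mulShift_apply, mul_comm]

lemma gaussSum_stdAddChar_ne_zero_of_isPrimitive {N : ℕ} [NeZero N]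
    {χ : DirichletCharacter ℂ N} (hχ : χ.IsPrimitive) : gaussSum χ ZMod.stdAddChar ≠ 0 := by
  intro hG
  have hdft : ZMod.dft (χ : ZMod N → ℂ) = ZMod.dft 0 := by
    ext k
    rw [hχ.fourierTransform_eq_inv_mul_gaussSum, hG, mul_zero, map_zero, Pi.zero_apply]
  simpa using congr_fun (ZMod.dft.injective hdft) 1

lemma sum_range_mul_exp_eq_gaussSum {N : ℕ} [NeZero N] (χ : DirichletCharacter ℂ N) :
    ∑ b ∈ range N, χ (b : ZMod N) * cexp (2 * Real.pi * I * b / N) =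
      gaussSum χ ZMod.stdAddChar := by
  rw [gaussSum, ← sum_range_natCast_eq_sum_zmod]
  simp only [ZMod.stdAddChar_apply, ZMod.toCircle_natCast]

lemma sum_range_mul_hzeta {d H : ℕ} [NeZero H] (hdH : d ∣ H) (χ : DirichletCharacter ℂ d)
    {s : ℂ} (hs : 1 < s.re) :
    ∑ a ∈ range H, χ ((a + 1 : ℕ) : ZMod d) * hzeta (((a : ℝ) + 1) / H) s =
      H ^ s * LSeries (fun n => χ (n : ZMod d)) s := by
  simp only [hzeta_eq_hurwitzZeta _ hs]
  rw [sum_range_succ_mul_eq_sum_zmod hdH χ (hurwitzZeta · s),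
    sum_mul_hurwitzZeta_toAddCircle _ hs]
  simp only [map_natCast]

lemma sum_range_mul_hzeta_neg {d H : ℕ} [NeZero H] (hdH : d ∣ H) (χ : DirichletCharacter ℂ d)
    {s : ℂ} (hs : 1 < s.re) :
    ∑ a ∈ range H, χ ((a + 1 : ℕ) : ZMod d) * hzeta (-(((a : ℝ) + 1) / H)) s =
      χ (-1) * ∑ a ∈ range H, χ ((a + 1 : ℕ) : ZMod d) * hzeta (((a : ℝ) + 1) / H) s := by
  simp only [hzeta_eq_hurwitzZeta _ hs]
  exact sum_range_succ_mul_comp_neg hdH χ (hurwitzZeta · s)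

lemma sum_range_mul_hzetaStar {M N : ℕ} [NeZero M] [NeZero N] {χ : DirichletCharacter ℂ N}
    (hχ : χ.IsPrimitive) {s : ℂ} (hs : 1 < s.re) :
    ∑ b ∈ range (M * N), χ ((b + 1 : ℕ) : ZMod N) * hzetaStar (((b : ℝ) + 1) / (M * N : ℕ)) s =
      M * M ^ (-s) * gaussSum χ ZMod.stdAddChar * LSeries (fun n => χ⁻¹ (n : ZMod N)) s := by
  simp only [hzetaStar_eq_expZeta _ hs]
  rw [sum_range_succ_mul_eq_sum_zmod (dvd_mul_left N M) χ (expZeta · s),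
    sum_mul_expZeta_toAddCircle _ hs]
  simp only [sum_stdAddChar_mul_castHom, sum_stdAddChar_mul_eq_inv_mul_gaussSum hχ]
  rw [LSeries_ite_dvd (fun k => M * (χ⁻¹ (k : ZMod N) * gaussSum χ ZMod.stdAddChar)) s,
    show (fun k : ℕ => M * (χ⁻¹ (k : ZMod N) * gaussSum χ ZMod.stdAddChar)) =
      ((M : ℂ) * gaussSum χ ZMod.stdAddChar) • fun n : ℕ => χ⁻¹ (n : ZMod N) by
        ext; simp only [Pi.smul_apply, smul_eq_mul]; ring,
    LSeries_smul]
  ring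

lemma sum_range_mul_hzetaStar_neg {d H : ℕ} [NeZero H] (hdH : d ∣ H)
    (χ : DirichletCharacter ℂ d) {s : ℂ} (hs : 1 < s.re) :
    ∑ b ∈ range H, χ ((b + 1 : ℕ) : ZMod d) * hzetaStar (-(((b : ℝ) + 1) / H)) s =
      χ (-1) * ∑ b ∈ range H, χ ((b + 1 : ℕ) : ZMod d) * hzetaStar (((b : ℝ) + 1) / H) s := by
  simp only [hzetaStar_eq_expZeta _ hs]
  exact sum_range_succ_mul_comp_neg hdH χ (expZeta · s)

lemma sum_sum_mul_add_mul {ι : Type*} (S : Finset ι) (f g u v u' v' : ι → ℂ) (c : ℂ) :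
    ∑ a ∈ S, ∑ b ∈ S, f a * g b * (u a * v b + c * u' a * v' b) =
      (∑ a ∈ S, f a * u a) * (∑ b ∈ S, g b * v b) +
        c * ((∑ a ∈ S, f a * u' a) * (∑ b ∈ S, g b * v' b)) := by
  rw [sum_mul_sum, sum_mul_sum, mul_sum, ← sum_add_distrib]
  refine sum_congr rfl fun a _ => ?_
  rw [mul_sum, ← sum_add_distrib]
  exact sum_congr rfl fun b _ => by ring

lemma natCast_mul_cpow_mul_natCast_mul_cpow_neg {M N : ℕ} [NeZero M] [NeZero N] (s w : ℂ) :
    ((M * N : ℕ) : ℂ) ^ (s - w + 1) * (M * (M : ℂ) ^ (-s)) =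
      (N : ℂ) ^ (s - 1) * ((M * N : ℕ) : ℂ) ^ (2 - w) := by
  have hM : (M : ℂ) ≠ 0 := NeZero.ne _
  have hH : ((M * N : ℕ) : ℂ) ≠ 0 := NeZero.ne _
  rw [show s - w + 1 = (s - 1) + (2 - w) by ring, cpow_add _ _ hH, Nat.cast_mul,
    natCast_mul_natCast_cpow, ← Nat.cast_mul]
  have hM1 : (M : ℂ) ^ (s - 1) * (M * (M : ℂ) ^ (-s)) = 1 := by
    calc (M : ℂ) ^ (s - 1) * (M * (M : ℂ) ^ (-s)) = (M : ℂ) ^ (s - 1 + 1 + -s) := by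
          rw [cpow_add _ _ hM, cpow_add _ _ hM, cpow_one, mul_assoc]
      _ = 1 := by rw [show s - 1 + 1 + -s = 0 by ring, cpow_zero]
  linear_combination (N : ℂ) ^ (s - 1) * ((M * N : ℕ) : ℂ) ^ (2 - w) * hM1

theorem rankin_selberg_eisenstein_dirichlet_series_general
    (M N : ℕ) (hM : 0 < M) (hN : 0 < N)
    (χ₁ : DirichletCharacter ℂ M) (χ₂ : DirichletCharacter ℂ N)
    (hχ₂ : χ₂.IsPrimitive) (w : ℕ)
    (hpar : χ₁ (-1) * χ₂ (-1) = (-1) ^ w)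
    (s : ℂ) (hs : (w : ℝ) + 1 < s.re) :
    (1 / (2 * ∑ b ∈ Finset.range N,
          χ₂ ((b : ℕ) : ZMod N) * Complex.exp (2 * Real.pi * Complex.I * (b : ℂ) / (N : ℂ)))) *
        (∑ a ∈ Finset.range (M * N), ∑ b ∈ Finset.range (M * N),
          χ₁ ((a + 1 : ℕ) : ZMod M) * χ₂ ((b + 1 : ℕ) : ZMod N) *
            (hzeta (((a : ℝ) + 1) / (M * N : ℕ)) (s - w + 1) *
                hzetaStar (((b : ℝ) + 1) / (M * N : ℕ)) s +
              (-1) ^ w * hzeta (-(((a : ℝ) + 1) / (M * N : ℕ))) (s - w + 1) *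
                hzetaStar (-(((b : ℝ) + 1) / (M * N : ℕ))) s)) =
      (N : ℂ) ^ (s - 1) * ((M * N : ℕ) : ℂ) ^ ((2 : ℂ) - (w : ℂ)) *
        LSeries (fun n => χ₁ ((n : ℕ) : ZMod M)) (s - w + 1) *
        LSeries (fun n => χ₂⁻¹ ((n : ℕ) : ZMod N)) s := by
  have := NeZero.of_pos hM
  have := NeZero.of_pos hN
  have hs₁ : 1 < s.re := by linarith [(w.cast_nonneg : (0 : ℝ) ≤ w)]
  have hσ : 1 < (s - w + 1).re := by simp only [add_re, sub_re, natCast_re, one_re]; linarith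
  have hsign : (-1) ^ w * (χ₁ (-1) * χ₂ (-1)) = 1 := by
    rw [hpar, ← mul_pow, neg_one_mul, neg_neg, one_pow]
  have hG := gaussSum_stdAddChar_ne_zero_of_isPrimitive hχ₂
  rw [sum_range_mul_exp_eq_gaussSum, sum_sum_mul_add_mul,
    sum_range_mul_hzeta_neg (dvd_mul_right M N) χ₁ hσ,
    sum_range_mul_hzetaStar_neg (dvd_mul_left N M) χ₂ hs₁,
    sum_range_mul_hzeta (dvd_mul_right M N) χ₁ hσ, sum_range_mul_hzetaStar hχ₂ hs₁,
    mul_mul_mul_comm (χ₁ (-1)), ← mul_assoc _ (χ₁ (-1) * χ₂ (-1)), hsign, one_mul,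
    ← natCast_mul_cpow_mul_natCast_mul_cpow_neg]
  field_simp
  ring

/-- Rankin–Selberg computation for the Eisenstein series `F_{χ₁,χ₂}^{(w)}` (with
`w = k - j ≥ 1`): if `χ₁` is a Dirichlet character mod `M`, `χ₂` a primitive Dirichlet
character mod `N` with `gcd(M,N) = 1`, `H = MN`, and `χ₁χ₂(-1) = (-1)^w`, then for
`Re(s)` large,
`(1/(2G(χ₂))) ∑_{a,b=1}^{H} χ₁(a)χ₂(b)[ζ(a/H, s-w+1)ζ*(b/H, s) + (-1)^w ζ(-a/H, s-w+1)ζ*(-b/H, s)]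
  = N^{s-1} H^{2-w} L_M(χ₁, s-w+1) L(χ₂⁻¹, s)`. -/
theorem rankin_selberg_eisenstein_dirichlet_series
    (M N : ℕ) (hM : 0 < M) (hN : 0 < N) (hMN : Nat.Coprime M N)
    (χ₁ : DirichletCharacter ℂ M) (χ₂ : DirichletCharacter ℂ N)
    (hχ₂ : χ₂.IsPrimitive) (w : ℕ) (hw : 1 ≤ w)
    (hpar : χ₁ (-1) * χ₂ (-1) = (-1) ^ w)
    (s : ℂ) (hs : (w : ℝ) + 1 < s.re) :
    (1 / (2 * ∑ b ∈ Finset.range N,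
          χ₂ ((b : ℕ) : ZMod N) * Complex.exp (2 * Real.pi * Complex.I * (b : ℂ) / (N : ℂ)))) *
        (∑ a ∈ Finset.range (M * N), ∑ b ∈ Finset.range (M * N),
          χ₁ ((a + 1 : ℕ) : ZMod M) * χ₂ ((b + 1 : ℕ) : ZMod N) *
            (hzeta (((a : ℝ) + 1) / (M * N : ℕ)) (s - w + 1) *
                hzetaStar (((b : ℝ) + 1) / (M * N : ℕ)) s +
              (-1) ^ w * hzeta (-(((a : ℝ) + 1) / (M * N : ℕ))) (s - w + 1) *
                hzetaStar (-(((b : ℝ) + 1) / (M * N : ℕ))) s)) =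
      (N : ℂ) ^ (s - 1) * ((M * N : ℕ) : ℂ) ^ ((2 : ℂ) - (w : ℂ)) *
        LSeries (fun n => χ₁ ((n : ℕ) : ZMod M)) (s - w + 1) *
        LSeries (fun n => χ₂⁻¹ ((n : ℕ) : ZMod N)) s :=
  rankin_selberg_eisenstein_dirichlet_series_general M N hM hN χ₁ χ₂ hχ₂ w hpar s hs
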